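/- Let m ≥ 3 and let Q_1,…,Q_m ∈ ℂ^{m+1} be any m linearly independent vectors. Then the ℂ-vector space of forms of degree m in m+1 variables vanishing to order ≥ m−1 at each of the m points [Q_i] has dimension exactly 2^m. -/

import Mathlib

/-!
An invertible linear change of coordinates moves `Q₁, …, Qₘ` to the coordinate points
`e₁, …, eₘ` and preserves both homogeneity and orders of vanishing, by the chain rule.
At a coordinate point `eₜ`, a form of degree `d` vanishes to order `≥ k` exactly when each of its
monomials has `xₜ`-exponent at most `d - k`. For `d = m`, `k = m - 1` the admissible monomials
are `x₀^(m - |T|) ∏_{i ∈ T} xᵢ` for `T ⊆ {1, …, m}`, and there are `2^m` of them.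
-/

open MvPolynomial

/-- Composition of partial derivatives along a list of variable indices. -/
noncomputable def derivMap {N : ℕ} (l : List (Fin N)) :
    MvPolynomial (Fin N) ℂ →ₗ[ℂ] MvPolynomial (Fin N) ℂ :=
  l.foldr (fun i f => (pderiv i).toLinearMap.comp f) LinearMap.id

/-- The subspace of polynomials vanishing to order ≥ k at the point `a`,
i.e. all iterated partial derivatives of total order ≤ k-1 vanish at `a`. -/
noncomputable def vanishingSubmodule {N : ℕ} (a : Fin N → ℂ) (k : ℕ) :
    Submodule ℂ (MvPolynomial (Fin N) ℂ) :=
  ⨅ (l : List (Fin N)) (_ : l.length < k),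
    LinearMap.ker ((aeval a).toLinearMap.comp (derivMap l))

theorem Multiset.toFinsupp_cons {α : Type*} [DecidableEq α] (a : α) (s : Multiset α) :
    Multiset.toFinsupp (a ::ₘ s) = Multiset.toFinsupp s + Finsupp.single a 1 := by
  rw [← Multiset.singleton_add, Multiset.toFinsupp_add, Multiset.toFinsupp_singleton, add_comm]

theorem Multiset.degree_toFinsupp {α : Type*} [DecidableEq α] (s : Multiset α) :
    (Multiset.toFinsupp s).degree = Multiset.card s :=
  (Finsupp.degree_apply _).trans (Multiset.toFinsupp_sum_eq s)

theorem Finsupp.eq_of_degree_eq_of_forall_ne {σ : Type*} {γ α : σ →₀ ℕ} (t : σ)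
    (h : ∀ j ≠ t, γ j = α j) (hd : γ.degree = α.degree) : γ = α := by
  have he : γ.erase t = α.erase t := by
    ext j
    rcases eq_or_ne j t with rfl | hj
    · simp
    · simp [Finsupp.erase_ne hj, h j hj]
  have ht : γ t = α t := by
    rw [← Finsupp.erase_add_single t γ, ← Finsupp.erase_add_single t α, map_add, map_add, he,
      Finsupp.degree_single, Finsupp.degree_single] at hd
    exact Nat.add_left_cancel hd
  rw [← Finsupp.erase_add_single t γ, ← Finsupp.erase_add_single t α, he, ht]

namespace MvPolynomial

variable {R σ τ : Type*} [CommSemiring R]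

theorem pderiv_bind₁ [Fintype τ] (f : τ → MvPolynomial σ R) (j : σ) (p : MvPolynomial τ R) :
    pderiv j (bind₁ f p) = ∑ r, bind₁ f (pderiv r p) * pderiv j (f r) := by
  classical
  induction p using MvPolynomial.induction_on with
  | C a => simp
  | add p q hp hq => simp [hp, hq, add_mul, Finset.sum_add_distrib]
  | mul_X p i hp =>
    simp only [map_mul, bind₁_X_right, pderiv_mul, hp, pderiv_X, map_add, add_mul,
      Finset.sum_add_distrib, Finset.sum_mul]
    congr 1
    · exact Finset.sum_congr rfl fun r _ => mul_right_comm _ _ _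
    · simp [Pi.single_apply]

theorem aeval_piSingle_monomial [Fintype σ] [DecidableEq σ] (t : σ) (β : σ →₀ ℕ) (c : R) :
    aeval (Pi.single t 1) (monomial β c) = if ∀ j ≠ t, β j = 0 then c else 0 := by
  rw [aeval_monomial, Finsupp.prod_fintype _ _ (by simp), Algebra.algebraMap_self,
    RingHom.id_apply]
  split_ifs with h
  · rw [Fintype.prod_eq_single t fun j hj => by simp [h j hj]]
    simp
  · push Not at h
    obtain ⟨j, hjt, hj⟩ := h
    rw [Finset.prod_eq_zero (Finset.mem_univ j) (by simp [hjt, hj]), mul_zero]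

end MvPolynomial

namespace Matrix

variable {R n : Type*} [CommSemiring R] [Fintype n]

theorem pderiv_toMvPolynomial (A : Matrix n n R) (i j : n) :
    pderiv j (A.toMvPolynomial i) = C (A i j) := by
  classical
  simp [toMvPolynomial, ← C_mul_X_eq_monomial, pderiv_X, Pi.single_apply]

theorem aeval_bind₁_toMvPolynomial (A : Matrix n n R) (b : n → R) (p : MvPolynomial n R) :
    aeval b (bind₁ A.toMvPolynomial p) = aeval (A *ᵥ b) p := by
  rw [aeval_bind₁]
  congr 2
  funext i
  exact toMvPolynomial_eval_eq_apply A i b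

theorem bind₁_toMvPolynomial_comp (A B : Matrix n n R) :
    (bind₁ A.toMvPolynomial).comp (bind₁ B.toMvPolynomial) = bind₁ (B * A).toMvPolynomial := by
  ext1 i
  simp [toMvPolynomial_mul]

theorem isHomogeneous_bind₁_toMvPolynomial (A : Matrix n n R) {p : MvPolynomial n R} {d : ℕ}
    (hp : p.IsHomogeneous d) : (bind₁ A.toMvPolynomial p).IsHomogeneous d := by
  simpa using hp.aeval A.toMvPolynomial (toMvPolynomial_isHomogeneous A)

variable [DecidableEq n]

/-- The substitution `p(x) ↦ p(A x)`. -/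
noncomputable def linearSubstEquiv (A : Matrix n n R) [Invertible A] :
    MvPolynomial n R ≃ₐ[R] MvPolynomial n R :=
  AlgEquiv.ofAlgHom (bind₁ A.toMvPolynomial) (bind₁ (⅟A).toMvPolynomial)
    (by rw [bind₁_toMvPolynomial_comp, invOf_mul_self, toMvPolynomial_one, bind₁_X_left])
    (by rw [bind₁_toMvPolynomial_comp, mul_invOf_self, toMvPolynomial_one, bind₁_X_left])

theorem comap_linearSubstEquiv_homogeneousSubmodule (A : Matrix n n R) [Invertible A] (d : ℕ) :
    (homogeneousSubmodule n R d).comap A.linearSubstEquiv.toLinearMap =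
      homogeneousSubmodule n R d := by
  ext p
  refine ⟨fun hp => ?_, A.isHomogeneous_bind₁_toMvPolynomial⟩
  exact A.linearSubstEquiv.symm_apply_apply p ▸ (⅟A).isHomogeneous_bind₁_toMvPolynomial hp

end Matrix

open Matrix in
theorem exists_isUnit_mulVec_single_succ_eq {K : Type*} [Field K] {m : ℕ}
    {Q : Fin m → Fin (m + 1) → K} (hQ : LinearIndependent K Q) :
    ∃ A : Matrix (Fin (m + 1)) (Fin (m + 1)) K, IsUnit A ∧ ∀ i, A *ᵥ Pi.single i.succ 1 = Q i := by
  obtain ⟨v, hv⟩ := exists_linearIndependent_cons_of_lt_rank hQ (by simp)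
  refine ⟨(of (Fin.cons v Q))ᵀ, linearIndependent_cols_iff_isUnit.mp hv, fun i => ?_⟩
  rw [mulVec_single_one]
  rfl

section Vanishing

open Matrix

variable {N : ℕ}

theorem derivMap_cons (j : Fin N) (l : List (Fin N)) (p : MvPolynomial (Fin N) ℂ) :
    derivMap (j :: l) p = pderiv j (derivMap l p) := rfl

theorem derivMap_concat (l : List (Fin N)) (j : Fin N) (p : MvPolynomial (Fin N) ℂ) :
    derivMap (l.concat j) p = derivMap l (pderiv j p) := by
  induction l with
  | nil => rfl
  | cons i l ih => exact congrArg (pderiv i) ih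

theorem mem_vanishingSubmodule_iff {a : Fin N → ℂ} {k : ℕ} {p : MvPolynomial (Fin N) ℂ} :
    p ∈ vanishingSubmodule a k ↔ ∀ l : List (Fin N), l.length < k → aeval a (derivMap l p) = 0 := by
  simp [vanishingSubmodule]

theorem mem_vanishingSubmodule_succ_iff {a : Fin N → ℂ} {k : ℕ} {p : MvPolynomial (Fin N) ℂ} :
    p ∈ vanishingSubmodule a (k + 1) ↔
      aeval a p = 0 ∧ ∀ j, pderiv j p ∈ vanishingSubmodule a k := by
  simp only [mem_vanishingSubmodule_iff, ← derivMap_concat]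
  constructor
  · intro h
    exact ⟨h [] k.succ_pos, fun j l hl => h _ (by simpa using hl)⟩
  · rintro ⟨h0, h⟩ l hl
    rcases l.eq_nil_or_concat with rfl | ⟨l, j, rfl⟩
    · exact h0
    · exact h j l (by simpa using hl)

theorem bind₁_toMvPolynomial_mem_vanishingSubmodule (A : Matrix (Fin N) (Fin N) ℂ)
    {b : Fin N → ℂ} {k : ℕ} {p : MvPolynomial (Fin N) ℂ}
    (hp : p ∈ vanishingSubmodule (A *ᵥ b) k) :
    bind₁ A.toMvPolynomial p ∈ vanishingSubmodule b k := by
  induction k generalizing p with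
  | zero => simp [mem_vanishingSubmodule_iff]
  | succ k ih =>
    rw [mem_vanishingSubmodule_succ_iff] at hp ⊢
    refine ⟨by rw [A.aeval_bind₁_toMvPolynomial, hp.1], fun j => ?_⟩
    rw [pderiv_bind₁]
    refine Submodule.sum_mem _ fun r _ => ?_
    rw [A.pderiv_toMvPolynomial, mul_comm, ← smul_eq_C_mul]
    exact Submodule.smul_mem _ _ (ih (hp.2 r))

theorem comap_linearSubstEquiv_vanishingSubmodule (A : Matrix (Fin N) (Fin N) ℂ) [Invertible A]
    (b : Fin N → ℂ) (k : ℕ) :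
    (vanishingSubmodule b k).comap A.linearSubstEquiv.toLinearMap =
      vanishingSubmodule (A *ᵥ b) k := by
  ext p
  refine ⟨fun hp => ?_, bind₁_toMvPolynomial_mem_vanishingSubmodule A⟩
  have := bind₁_toMvPolynomial_mem_vanishingSubmodule (⅟A) (b := A *ᵥ b)
    (by rwa [mulVec_mulVec, invOf_mul_self, one_mulVec])
  exact A.linearSubstEquiv.symm_apply_apply p ▸ this

theorem derivMap_monomial (l : List (Fin N)) (γ : Fin N →₀ ℕ) (c : ℂ) :
    derivMap l (monomial γ c) =
      monomial (γ - Multiset.toFinsupp ↑l)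
        (c * ∏ k, (γ k).descFactorial (Multiset.toFinsupp ↑l k)) := by
  induction l with
  | nil => simp [derivMap]
  | cons j l ih =>
    set D := Multiset.toFinsupp (↑l : Multiset (Fin N))
    have hfactor : ∀ k, (γ k).descFactorial ((D + Finsupp.single j 1 : Fin N →₀ ℕ) k) =
        (γ k).descFactorial (D k) * if k = j then γ k - D k else 1 := by
      intro k
      rcases eq_or_ne k j with rfl | hkj
      · simp [Nat.descFactorial_succ, mul_comm]
      · simp [hkj]
    rw [derivMap_cons, ih, pderiv_monomial, ← Multiset.cons_coe, Multiset.toFinsupp_cons,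
      tsub_add_eq_tsub_tsub, Finset.prod_congr rfl fun k _ => hfactor k, Finset.prod_mul_distrib,
      Finset.prod_ite_eq']
    simp only [Finset.mem_univ, if_true, Finsupp.tsub_apply]
    push_cast
    rw [mul_assoc]

theorem monomial_mem_vanishingSubmodule_piSingle {t : Fin N} {α : Fin N →₀ ℕ} {k : ℕ}
    (h : k + α t ≤ α.degree) (c : ℂ) :
    monomial α c ∈ vanishingSubmodule (Pi.single t 1) k := by
  rw [mem_vanishingSubmodule_iff]
  intro l hl
  rw [derivMap_monomial, aeval_piSingle_monomial, if_neg]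
  intro hzero
  have hle : α ≤ Multiset.toFinsupp ↑l + Finsupp.single t (α t) := fun j => by
    rcases eq_or_ne j t with rfl | hjt
    · simp
    · simpa [hjt, tsub_eq_zero_iff_le] using hzero j hjt
  have := Finsupp.degree_mono hle
  rw [map_add, Multiset.degree_toFinsupp, Multiset.coe_card, Finsupp.degree_single] at this
  omega

theorem aeval_piSingle_derivMap_monomial_of_ne {t : Fin N} {α γ : Fin N →₀ ℕ}
    {l : List (Fin N)} (hl : Multiset.toFinsupp ↑l = α.erase t) (hd : γ.degree = α.degree)
    (hne : γ ≠ α) (c : ℂ) :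
    aeval (Pi.single t 1 : Fin N → ℂ) (derivMap l (monomial γ c)) = 0 := by
  rw [derivMap_monomial, aeval_piSingle_monomial, hl]
  split_ifs with hzero
  · refine mul_eq_zero_of_right _ (Nat.cast_eq_zero.mpr ?_)
    by_contra hprod
    refine hne (Finsupp.eq_of_degree_eq_of_forall_ne t (fun j hj => ?_) hd)
    have h1 := hzero j hj
    have h2 := Finset.prod_ne_zero_iff.mp hprod j (Finset.mem_univ j)
    rw [Ne, Nat.descFactorial_eq_zero_iff_lt, not_lt] at h2
    simp only [Finsupp.tsub_apply, Finsupp.erase_ne hj] at h1 h2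
    omega
  · rfl

theorem add_le_of_mem_vanishingSubmodule_piSingle {t : Fin N} {k d : ℕ}
    {p : MvPolynomial (Fin N) ℂ} (hp : p.IsHomogeneous d)
    (hv : p ∈ vanishingSubmodule (Pi.single t 1) k) {α : Fin N →₀ ℕ} (hα : α ∈ p.support) :
    α t + k ≤ d := by
  by_contra! hlt
  have hdeg : ∀ γ ∈ p.support, γ.degree = d := fun γ hγ => by
    rw [Finsupp.degree_eq_weight_one]
    exact hp (mem_support_iff.mp hγ)
  -- differentiating along `α` with its `t`-th entry erased isolates the coefficient of `α`
  obtain ⟨l, hl⟩ : ∃ l : List (Fin N), Multiset.toFinsupp ↑l = α.erase t :=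
    ⟨(Finsupp.toMultiset (α.erase t)).toList, by simp⟩
  have hlen : l.length < k := by
    have := hdeg α hα
    rw [← Finsupp.erase_add_single t α, map_add, Finsupp.degree_single, ← hl,
      Multiset.degree_toFinsupp, Multiset.coe_card] at this
    omega
  have key := mem_vanishingSubmodule_iff.mp hv l hlen
  rw [p.as_sum, map_sum, map_sum, Finset.sum_eq_single α (fun γ hγ hne =>
      aeval_piSingle_derivMap_monomial_of_ne hl (by rw [hdeg γ hγ, hdeg α hα]) hne _)
      (absurd hα), derivMap_monomial, aeval_piSingle_monomial,
    if_pos fun j hj => by simp [hl, hj], hl, mul_eq_zero, Nat.cast_eq_zero,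
    Finset.prod_eq_zero_iff] at key
  obtain hc | ⟨j, -, hj⟩ := key
  · exact mem_support_iff.mp hα hc
  · rw [Nat.descFactorial_eq_zero_iff_lt] at hj
    rcases eq_or_ne j t with rfl | hjt
    · simp at hj
    · simp [Finsupp.erase_ne hjt] at hj

theorem homogeneousSubmodule_inf_iInf_vanishingSubmodule_piSingle {ι : Type*} (t : ι → Fin N)
    (d k : ℕ) :
    homogeneousSubmodule (Fin N) ℂ d ⊓ ⨅ i, vanishingSubmodule (Pi.single (t i) 1) k =
      restrictSupport ℂ {α | α.degree = d ∧ ∀ i, α (t i) + k ≤ d} := by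
  apply le_antisymm
  · rintro p ⟨hp, hv⟩ α hα
    refine ⟨?_, fun i => add_le_of_mem_vanishingSubmodule_piSingle hp
      ((Submodule.mem_iInf _).mp hv i) hα⟩
    rw [Finsupp.degree_eq_weight_one]
    exact hp (mem_support_iff.mp hα)
  · rw [restrictSupport_eq_span, Submodule.span_le]
    rintro _ ⟨α, ⟨hd, hα⟩, rfl⟩
    exact ⟨isHomogeneous_monomial _ hd, (Submodule.mem_iInf _).mpr fun i =>
      monomial_mem_vanishingSubmodule_piSingle (by have := hα i; omega) _⟩

end Vanishing

noncomputable def subsetExponent (m : ℕ) (T : Finset (Fin m)) : Fin (m + 1) →₀ ℕ :=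
  Finsupp.equivFunOnFinite.symm (Fin.cons (m - T.card) fun i => if i ∈ T then 1 else 0)

section SubsetExponent

variable {m : ℕ}

@[simp] theorem subsetExponent_zero (T : Finset (Fin m)) :
    subsetExponent m T 0 = m - T.card := rfl

@[simp] theorem subsetExponent_succ (T : Finset (Fin m)) (i : Fin m) :
    subsetExponent m T i.succ = if i ∈ T then 1 else 0 := by
  simp [subsetExponent]

theorem degree_subsetExponent (T : Finset (Fin m)) : (subsetExponent m T).degree = m := by
  rw [Finsupp.degree_eq_sum, Fin.sum_univ_succ]
  simp only [subsetExponent_zero, subsetExponent_succ, Finset.sum_boole,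
    Finset.filter_mem_eq_inter, Finset.univ_inter, Nat.cast_id]
  have := T.card_le_univ
  simp only [Fintype.card_fin] at this
  omega

theorem subsetExponent_injective : Function.Injective (subsetExponent m) := by
  intro T T' h
  ext i
  have := congrArg (· i.succ) h
  simp only [subsetExponent_succ] at this
  by_cases hi : i ∈ T <;> by_cases hi' : i ∈ T' <;> simp [hi, hi'] at this ⊢

theorem nat_card_range_subsetExponent : Nat.card (Set.range (subsetExponent m)) = 2 ^ m := by
  rw [Nat.card_range_of_injective subsetExponent_injective, Nat.card_eq_fintype_card,
    Fintype.card_finset, Fintype.card_fin]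

theorem range_subsetExponent :
    Set.range (subsetExponent m) =
      {α : Fin (m + 1) →₀ ℕ | α.degree = m ∧ ∀ i : Fin m, α i.succ + (m - 1) ≤ m} := by
  ext α
  constructor
  · rintro ⟨T, rfl⟩
    refine ⟨degree_subsetExponent T, fun i => ?_⟩
    have := i.pos
    simp only [subsetExponent_succ]
    split_ifs <;> omega
  · rintro ⟨hd, hα⟩
    refine ⟨({i | α i.succ = 1} : Finset (Fin m)),
      Finsupp.eq_of_degree_eq_of_forall_ne 0 (fun j hj => ?_)
        (by rw [degree_subsetExponent, hd])⟩
    obtain ⟨i, rfl⟩ := Fin.exists_succ_eq.mpr hj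
    have := hα i
    have := i.pos
    simp only [subsetExponent_succ, Finset.mem_filter, Finset.mem_univ, true_and]
    split_ifs <;> omega

end SubsetExponent

theorem stmt8_general (m : ℕ)
    (Q : Fin m → (Fin (m + 1) → ℂ)) (hQ : LinearIndependent ℂ Q) :
    Module.finrank ℂ
      ↥(homogeneousSubmodule (Fin (m + 1)) ℂ m ⊓
        ⨅ i, vanishingSubmodule (Q i) (m - 1)) = 2 ^ m := by
  obtain ⟨A, hA, hAQ⟩ := exists_isUnit_mulVec_single_succ_eq hQ
  let _ : Invertible A := hA.invertible
  have hcomap : (homogeneousSubmodule (Fin (m + 1)) ℂ m ⊓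
      ⨅ i : Fin m, vanishingSubmodule (Pi.single i.succ 1) (m - 1)).comap
        A.linearSubstEquiv.toLinearMap =
      homogeneousSubmodule (Fin (m + 1)) ℂ m ⊓ ⨅ i, vanishingSubmodule (Q i) (m - 1) := by
    simp only [Submodule.comap_inf, Submodule.comap_iInf,
      Matrix.comap_linearSubstEquiv_homogeneousSubmodule,
      comap_linearSubstEquiv_vanishingSubmodule, hAQ]
  rw [← hcomap, ← AlgEquiv.toLinearEquiv_toLinearMap, Submodule.comap_equiv_eq_map_symm,
    LinearEquiv.finrank_map_eq, homogeneousSubmodule_inf_iInf_vanishingSubmodule_piSingle,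
    Module.finrank_eq_nat_card_basis (basisRestrictSupport ℂ _), ← range_subsetExponent,
    nat_card_range_subsetExponent]

theorem stmt8 (m : ℕ) (hm : 3 ≤ m)
    (Q : Fin m → (Fin (m + 1) → ℂ)) (hQ : LinearIndependent ℂ Q) :
    Module.finrank ℂ
      ↥(homogeneousSubmodule (Fin (m + 1)) ℂ m ⊓
        ⨅ i, vanishingSubmodule (Q i) (m - 1)) = 2 ^ m :=
  stmt8_general m Q hQ
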